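/- For every strong composition a with ℓ(a) ≤ n, the fundamental quasisymmetric polynomial equals the β = 0 specialization of the quasisymmetric glide polynomial: F_a(x_1,...,x_n) = G_a^{(0)}(x_1,...,x_n). -/

import Mathlib

open scoped Classical
open MvPolynomial Finset

namespace GlidePaper

/-! ## Weak compositions, kompositions, glides -/

/-- Extend a length-`n` weak composition to a function on `ℕ` (zero outside). -/
def extVal {n : ℕ} (v : Fin n → ℕ) (t : ℕ) : ℕ := if h : t < n then v ⟨t, h⟩ else 0

/-- Extend a coloring to a function on `ℕ` (black outside). -/
def extRed {n : ℕ} (r : Fin n → Bool) (t : ℕ) : Bool := if h : t < n then r ⟨t, h⟩ else false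

/-- The flattening of a weak composition: the list of its nonzero entries, in order. -/
def flattenW {n : ℕ} (a : Fin n → ℕ) : List ℕ := ((List.finRange n).map a).filter (· ≠ 0)

/-- The (0-indexed) positions of the nonzero entries of `a`, in increasing order. -/
def nzPos {n : ℕ} (a : Fin n → ℕ) : List ℕ :=
  ((List.finRange n).filter (fun i => a i ≠ 0)).map Fin.val

/-- The excess of a weak komposition, i.e. its number of red entries. -/
def redCount {n : ℕ} (r : Fin n → Bool) : ℕ :=
  (Finset.univ.filter (fun i => r i = true)).card

/-- The weak komposition with values `v` and red set `r` is a glide of the weak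
composition `a` (all of length `n`).  Blocks are delimited by
`0 = e 0 < e 1 < ⋯ < e ℓ ≤ n` where `ℓ` is the number of nonzero entries of `a`;
the `j`-th block consists of the (1-indexed) entries `e j + 1, …, e (j+1)`,
i.e. the 0-indexed positions `e j, …, e (j+1) - 1`, entries beyond position `e ℓ`
vanish, and:
(i) the sum of each block is the corresponding entry of `flat a` plus the number of
red entries of the block; (ii) the block ends weakly left of the position of the
corresponding nonzero entry of `a`; (iii) the first entry of each block is not red.
Red entries are required to be positive. -/
def IsGlide {n : ℕ} (a : Fin n → ℕ) (v : Fin n → ℕ) (r : Fin n → Bool) : Prop :=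
  (∀ i, r i = true → 0 < v i) ∧
  ∃ e : ℕ → ℕ, e 0 = 0 ∧ e (flattenW a).length ≤ n ∧
    (∀ t, e (flattenW a).length ≤ t → extVal v t = 0) ∧
    (∀ j, j < (flattenW a).length → e j < e (j + 1)) ∧
    (∀ j, j < (flattenW a).length →
      ((∑ t ∈ Finset.Ico (e j) (e (j + 1)), extVal v t)
          = (flattenW a).getD j 0
            + ((Finset.Ico (e j) (e (j + 1))).filter (fun t => extRed r t = true)).card)
      ∧ e (j + 1) ≤ (nzPos a).getD j 0 + 1
      ∧ extRed r (e j) = false)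

/-- The glide polynomial `𝒢_a^{(β)}` in variables `x_1, …, x_n`, with coefficient
ring `R` and parameter `β : R`: the sum of `β^{ex(b)} x^b` over all glides `b` of `a`.
(Every glide of `a` has all entries at most `(∑ i, a i) + n`, so the sum below
ranges over a sufficiently large finite set.) -/
noncomputable def glidePoly {n : ℕ} {R : Type*} [CommRing R] (β : R) (a : Fin n → ℕ) :
    MvPolynomial (Fin n) R :=
  ∑ p : (Fin n → Fin ((∑ i, a i) + n + 1)) × (Fin n → Bool),
    if IsGlide a (fun i => (p.1 i : ℕ)) p.2 then
      monomial (Finsupp.equivFunOnFinite.symm fun i => ((p.1 i : ℕ))) (β ^ redCount p.2)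
    else 0

/-! ## Pipe dreams -/

/-- The state of a pipe while being traced through a pipe dream: either inside the
tile in row `r`, column `c` (0-indexed from the top-left), having entered from the
west (`fromWest = true`) or from the south (`fromWest = false`), or already exited
through the top edge at column `c`. -/
inductive PipeState : Type
  | inside (r c : ℕ) (fromWest : Bool)
  | exited (c : ℕ)
deriving DecidableEq

/-- One step of tracing a pipe through the pipe dream with crossing set `D`:
at a crossing tile the pipe goes straight; at an elbow tile a pipe entering from the
west exits north and a pipe entering from the south exits east. -/
def pipeStep (D : Finset (ℕ × ℕ)) : PipeState → PipeState
  | .exited c => .exited c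
  | .inside r c fromW =>
    let cross : Bool := decide ((r, c) ∈ D)
    if fromW ≠ cross then
      -- exits through the north edge of the tile
      if r = 0 then .exited c else .inside (r - 1) c false
    else .inside r (c + 1) true

/-- The pipe labeled `p` (0-indexed) enters the quadrant at row `p` from the west. -/
def startState (p : ℕ) : PipeState := .inside p 0 true

/-- Pipe `p` passes through tile `(r, c)` entering from the west (`fromW = true`)
or from the south (`fromW = false`). -/
def Passes (D : Finset (ℕ × ℕ)) (p r c : ℕ) (fromW : Bool) : Prop :=
  ∃ k, (pipeStep D)^[k] (startState p) = .inside r c fromW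

/-- Pipe `p` exits the quadrant through the top edge at column `c` (0-indexed). -/
def ExitsAt (D : Finset (ℕ × ℕ)) (p c : ℕ) : Prop :=
  ∃ k, (pipeStep D)^[k] (startState p) = .exited c

/-- The tile `x` is a crossing of `D` whose west-entering pipe is `p` and whose
south-entering pipe is `q`. -/
def CrossPair (D : Finset (ℕ × ℕ)) (x : ℕ × ℕ) (p q : ℕ) : Prop :=
  x ∈ D ∧ Passes D p x.1 x.2 true ∧ Passes D q x.1 x.2 false

/-- The reduction of a pipe dream: keep, among the crossings between each pair of
pipes, only the southwestmost one. -/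
noncomputable def reduct (D : Finset (ℕ × ℕ)) : Finset (ℕ × ℕ) :=
  D.filter (fun x => ∀ y ∈ D, ∀ p q : ℕ,
    CrossPair D x p q → (CrossPair D y p q ∨ CrossPair D y q p) → (y.1 ≤ x.1 ∧ x.2 ≤ y.2))

/-- `D` is a pipe dream for the permutation `w` (of `ℕ`, 0-indexed): in the reduction
of `D`, the pipe entering at row `p` exits at column `w p`, for every `p`. -/
def HasPerm (D : Finset (ℕ × ℕ)) (w : Equiv.Perm ℕ) : Prop :=
  ∀ p, ExitsAt (reduct D) p (w p)

/-- The excess of a pipe dream: its number of crossings minus that of its reduction. -/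
noncomputable def pdExcess (D : Finset (ℕ × ℕ)) : ℕ := D.card - (reduct D).card

/-- The number of crossings in (0-indexed) row `i` of `D`. -/
def wtRow (D : Finset (ℕ × ℕ)) (i : ℕ) : ℕ := (D.filter (fun x => x.1 = i)).card

/-- A pipe dream is quasi-Yamanouchi if the westmost crossing of every nonempty row
either lies in the westmost column or lies weakly west of some crossing in the row
below it. -/
def QuasiYamPD (D : Finset (ℕ × ℕ)) : Prop :=
  ∀ r c, (r, c) ∈ D → (∀ c' < c, (r, c') ∉ D) →
    (c = 0 ∨ ∃ c'', (r + 1, c'') ∈ D ∧ c ≤ c'')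

/-- One destandardization move, applied to row `r`: if row `r` is nonempty, has no
crossing in the first column, and all its crossings are strictly east of all the
crossings of row `r + 1`, shift every crossing of row `r` one step southwest
(crossings landing on existing crossings merge). -/
def DstStep (D : Finset (ℕ × ℕ)) (r : ℕ) (D' : Finset (ℕ × ℕ)) : Prop :=
  (∃ c, (r, c) ∈ D) ∧ (r, 0) ∉ D ∧
  (∀ c c', (r, c) ∈ D → (r + 1, c') ∈ D → c' < c) ∧
  D' = D.filter (fun x => x.1 ≠ r) ∪
        (D.filter (fun x => x.1 = r)).image (fun x => (r + 1, x.2 - 1))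

/-- `D'` is obtained from `D` by a (possibly empty) sequence of destandardization moves. -/
def DstReaches (D D' : Finset (ℕ × ℕ)) : Prop :=
  Relation.ReflTransGen (fun E E' => ∃ r, DstStep E r E') D D'

/-- No destandardization move applies to `D`. -/
def DstNormal (D : Finset (ℕ × ℕ)) : Prop := ∀ r D', ¬ DstStep D r D'

/-- The `β`-Grothendieck polynomial of `w`, written in the variables `x_1, …, x_n`:
the sum of `β^{ex(P)} x^{wt(P)}` over all pipe dreams `P` for `w`.  (All crossings
of any pipe dream for a permutation `w` with `w i = i` for `i ≥ m` lie in rows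
`< m` and columns `< m`, so for `n, M ≥ m` the finite sum below, over pipe dreams
contained in the box with `n` rows and `M` columns, is the full sum.) -/
noncomputable def grothPoly {R : Type*} [CommRing R] (β : R) (n M : ℕ) (w : Equiv.Perm ℕ) :
    MvPolynomial (Fin n) R :=
  ∑ D ∈ (Finset.range n ×ˢ Finset.range M).powerset.filter (fun D => HasPerm D w),
    monomial (Finsupp.equivFunOnFinite.symm fun i : Fin n => wtRow D i.1) (β ^ pdExcess D)

/-! ## Slide polynomials, refinement, dominance -/

/-- `b` dominates `a`: every initial partial sum of `b` is at least that of `a`. -/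
def Dominates {n : ℕ} (b a : Fin n → ℕ) : Prop :=
  ∀ k : ℕ, ∑ i ∈ Finset.univ.filter (fun i : Fin n => (i : ℕ) < k), a i
    ≤ ∑ i ∈ Finset.univ.filter (fun i : Fin n => (i : ℕ) < k), b i

/-- The (strong) composition `L` refines the composition `M` if `M` is obtained by
summing consecutive entries of `L`. -/
def ListRefines (L M : List ℕ) : Prop :=
  ∃ P : List (List ℕ), ([] ∉ P) ∧ P.flatten = L ∧ P.map List.sum = M

/-- The fundamental slide polynomial `𝔉_a`: the sum of `x^b` over weak compositions
`b` of length `n` which dominate `a` and with `flat b` refining `flat a`. -/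
noncomputable def slidePoly {n : ℕ} (a : Fin n → ℕ) : MvPolynomial (Fin n) ℤ :=
  ∑ p : Fin n → Fin ((∑ i, a i) + 1),
    if Dominates (fun i => (p i : ℕ)) a ∧
        ListRefines (flattenW (fun i => (p i : ℕ))) (flattenW a) then
      monomial (Finsupp.equivFunOnFinite.symm fun i => ((p i : ℕ))) 1
    else 0

/-- The fundamental quasisymmetric polynomial `F_a(x_1, …, x_n)` of a strong
composition `a`: the sum of `x^b` over weak compositions `b` of length `n` with
`flat b` refining `a`. -/
noncomputable def fundQS {R : Type*} [CommRing R] (n : ℕ) (a : List ℕ) :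
    MvPolynomial (Fin n) R :=
  ∑ p : Fin n → Fin (a.sum + 1),
    if ListRefines (flattenW (fun i => ((p i : ℕ)))) a then
      monomial (Finsupp.equivFunOnFinite.symm fun i => ((p i : ℕ))) 1
    else 0

/-- The weak composition of length `n` obtained from a list `L` (of length `≤ n`)
by prepending `n - L.length` zeros. -/
def padLeft (n : ℕ) (L : List ℕ) : Fin n → ℕ := fun i =>
  if n - L.length ≤ (i : ℕ) then L.getD ((i : ℕ) - (n - L.length)) 0 else 0

/-- A polynomial in `x_1, …, x_n` is quasisymmetric if, for every sequence of
positive exponents `e_1, …, e_k` and every pair of strictly increasing sequences of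
variable indices, the coefficients of the corresponding monomials agree. -/
def IsQuasiSym {R : Type*} [CommRing R] {n : ℕ} (f : MvPolynomial (Fin n) R) : Prop :=
  ∀ (k : ℕ) (e : Fin k → ℕ), (∀ t, 0 < e t) →
    ∀ g h : Fin k → Fin n, StrictMono g → StrictMono h →
      MvPolynomial.coeff
          (Finsupp.equivFunOnFinite.symm fun i => ∑ t, if g t = i then e t else 0) f
        = MvPolynomial.coeff
            (Finsupp.equivFunOnFinite.symm fun i => ∑ t, if h t = i then e t else 0) f

/-! ## Set-valued tableaux -/

/-- `f` (giving, for each box `(i, j)` with `i < n`, `j < B`, a set of entries,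
where the element `k : Fin n` stands for the value `k + 1 ∈ {1, …, n}`) is a
set-valued tableau of shape `lam`: boxes of the diagram are nonempty, boxes outside
are empty, rows weakly increase (max of a box ≤ min of the box to its right) and
columns strictly increase. -/
def IsSVT (n B : ℕ) (lam : ℕ → ℕ) (f : Fin n → Fin B → Finset (Fin n)) : Prop :=
  (∀ (i : Fin n) (j : Fin B), (j : ℕ) < lam (i : ℕ) → (f i j).Nonempty) ∧
  (∀ (i : Fin n) (j : Fin B), lam (i : ℕ) ≤ (j : ℕ) → f i j = ∅) ∧
  (∀ (i : Fin n) (j j' : Fin B), (j : ℕ) + 1 = (j' : ℕ) → (j' : ℕ) < lam (i : ℕ) →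
    ∀ x ∈ f i j, ∀ y ∈ f i j', x ≤ y) ∧
  (∀ (i i' : Fin n) (j : Fin B), (i : ℕ) + 1 = (i' : ℕ) → (j : ℕ) < lam (i' : ℕ) →
    ∀ x ∈ f i j, ∀ y ∈ f i' j, (x : ℕ) < (y : ℕ))

/-- A set-valued tableau is quasi-Yamanouchi if for every value `k + 1 > 1` occurring
in it, some instance of `k + 1` lies weakly left of some instance of `k` in a
different box. -/
def SVTQY {n B : ℕ} (f : Fin n → Fin B → Finset (Fin n)) : Prop :=
  ∀ k : Fin n, 0 < (k : ℕ) → (∃ i j, k ∈ f i j) →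
    ∃ (i : Fin n) (j : Fin B) (i' : Fin n) (j' : Fin B) (k' : Fin n),
      (k' : ℕ) + 1 = (k : ℕ) ∧ k ∈ f i j ∧ k' ∈ f i' j' ∧
      (j : ℕ) ≤ (j' : ℕ) ∧ (i, j) ≠ (i', j')

/-- The weight of a set-valued tableau: its `k`-th entry is the number of boxes
containing the value `k + 1`. -/
def svtWt {n B : ℕ} (f : Fin n → Fin B → Finset (Fin n)) : Fin n → ℕ :=
  fun k => ∑ i : Fin n, ∑ j : Fin B, if k ∈ f i j then 1 else 0

/-- The total number of entries of a set-valued tableau. -/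
def svtSize {n B : ℕ} (f : Fin n → Fin B → Finset (Fin n)) : ℕ :=
  ∑ i : Fin n, ∑ j : Fin B, (f i j).card

/-- The Lehmer code of a permutation of `ℕ` (0-indexed). -/
noncomputable def lehmer (w : Equiv.Perm ℕ) (i : ℕ) : ℕ :=
  Set.ncard {j | i < j ∧ w j < w i}

/-- The number of inversions of a permutation of `ℕ`. -/
noncomputable def invNum (w : Equiv.Perm ℕ) : ℕ :=
  Set.ncard {p : ℕ × ℕ | p.1 < p.2 ∧ w p.2 < w p.1}

/-- The Knutson–Miller–Yong map `φ` from set-valued tableaux (entries in `{1,…,n}`,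
shape with at most `n` rows, boxes indexed by `Fin n × Fin B`) to pipe dreams:
a value `k + 1` in the (0-indexed) box `(i, j)` becomes a crossing in row
`n - 1 - k` and column `j + k - i`.  (This is the upside-down placement over the
bottom pipe dream `P_{L(w)}` followed by moving each label `i + r - n - 1` steps
northeast.) -/
def phiKMY (n B : ℕ) (f : Fin n → Fin B → Finset (Fin n)) : Finset (ℕ × ℕ) :=
  ((Finset.univ : Finset (Fin n × Fin B × Fin n)).filter
      (fun t => t.2.2 ∈ f t.1 t.2.1)).image
    (fun t => (n - 1 - (t.2.2 : ℕ), (t.2.1 : ℕ) + (t.2.2 : ℕ) - (t.1 : ℕ)))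

/-! ## Multi-fundamental quasisymmetric functions -/

/-- Between the `i`-th and `(i+1)`-st sets (0-indexed) of a chain for the strong
composition `a`, the strict inequality is imposed exactly when `i + 1` is a partial
sum `a_1 + ⋯ + a_k` of `a`. -/
def ChainStrictAt (a : List ℕ) (i : ℕ) : Prop := ∃ k, 0 < k ∧ (a.take k).sum = i + 1

/-- `σ = (S_1, …, S_{|a|})` is a chain in `Ã_a`: a sequence of `a.sum` nonempty
finite sets of positive integers with `max S_i < min S_{i+1}` when `i` is a partial
sum of `a`, and `max S_i ≤ min S_{i+1}` otherwise. -/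
def IsMultiChain (a : List ℕ) (σ : List (Finset ℕ)) : Prop :=
  σ.length = a.sum ∧ (∀ S ∈ σ, S.Nonempty) ∧ (∀ S ∈ σ, ∀ x ∈ S, 1 ≤ x) ∧
  ∀ i, i + 1 < σ.length →
    ((ChainStrictAt a i → ∀ x ∈ σ.getD i ∅, ∀ y ∈ σ.getD (i + 1) ∅, x < y) ∧
     (¬ ChainStrictAt a i → ∀ x ∈ σ.getD i ∅, ∀ y ∈ σ.getD (i + 1) ∅, x ≤ y))

/-- The number of occurrences of the value `x` among the sets of the chain `σ`. -/
def chainWt (σ : List (Finset ℕ)) (x : ℕ) : ℕ := (σ.filter (fun S => x ∈ S)).length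

/-- The weak composition of length `m + n` obtained by prepending `m` zeros to `a`. -/
def prependZeros {n : ℕ} (m : ℕ) (a : Fin n → ℕ) : Fin (m + n) → ℕ := fun i =>
  if h : (i : ℕ) < m then 0 else a ⟨(i : ℕ) - m, by have := i.isLt; omega⟩

/-! ## Unsplit glides, quasiflatness -/

/-- A weak composition is quasiflat if its nonzero entries occupy consecutive
positions. -/
def Quasiflat {n : ℕ} (a : Fin n → ℕ) : Prop :=
  ∀ i j k : Fin n, i ≤ j → j ≤ k → a i ≠ 0 → a k ≠ 0 → a j ≠ 0

/-- The number of zero entries of `a` that precede some nonzero entry. -/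
def zBefore {n : ℕ} (a : Fin n → ℕ) : ℕ :=
  (Finset.univ.filter (fun i : Fin n => a i = 0 ∧ ∃ j, i < j ∧ a j ≠ 0)).card

/-! ## The genomic shuffle product and the glide product -/

/-- `C` is a shuffle (interleaving) of the words `A` and `B`. -/
inductive IsShuffle {α : Type*} : List α → List α → List α → Prop
  | nil : IsShuffle [] [] []
  | left {A B C : List α} {a : α} : IsShuffle A B C → IsShuffle (a :: A) B (a :: C)
  | right {A B C : List α} {b : α} : IsShuffle A B C → IsShuffle A (b :: B) (b :: C)

/-- `A^gen`: replace the `j`-th occurrence (from the left) of each letter `i` of `A`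
by the superscripted symbol `(i, j)`. -/
def toGen (A : List ℕ) : List (ℕ × ℕ) :=
  (List.range A.length).map (fun i => (A.getD i 0, (A.take i).count (A.getD i 0) + 1))

/-- The lexicographic order on superscripted symbols: `i^j < k^l` iff `i < k`, or
`i = k` and `j < l`. -/
def ltSym (x y : ℕ × ℕ) : Prop := x.1 < y.1 ∨ (x.1 = y.1 ∧ x.2 < y.2)

/-- `C` lies in the genomic shuffle product `A ⧢_gen B`: superscripts of equal
letters weakly increase from left to right, no two consecutive symbols of `C` are
equal, and every subword of `C` containing each symbol of `C` exactly once is a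
shuffle of `A^gen` and `B^gen`. -/
def InGenShuffle (A B : List ℕ) (C : List (ℕ × ℕ)) : Prop :=
  (∀ p q : ℕ, p < q → ∀ (hp : p < C.length) (hq : q < C.length),
    (C.get ⟨p, hp⟩).1 = (C.get ⟨q, hq⟩).1 → (C.get ⟨p, hp⟩).2 ≤ (C.get ⟨q, hq⟩).2) ∧
  List.Chain' (· ≠ ·) C ∧
  (∀ C' : List (ℕ × ℕ), C'.Sublist C → (∀ s ∈ C, C'.count s = 1) →
    IsShuffle (toGen A) (toGen B) C')

/-- `R` is the decomposition of the word `C` into its maximal strictly increasing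
runs. -/
def IsRunDecomp (C : List (ℕ × ℕ)) (R : List (List (ℕ × ℕ))) : Prop :=
  R.flatten = C ∧ (∀ r ∈ R, r ≠ []) ∧ (∀ r ∈ R, r.Chain' ltSym) ∧
  R.Chain' (fun r s => ∀ x y, x ∈ r.getLast? → y ∈ s.head? → ¬ ltSym x y)

/-- `G` is a genotype of the sequence of words `R`: it is obtained by deleting, from
the words of `R`, all but one occurrence of each symbol occurring in `R`, and then
erasing all superscripts. -/
def IsGenotypeSeq (R : List (List (ℕ × ℕ))) (G : List (List ℕ)) : Prop :=
  ∃ R' : List (List (ℕ × ℕ)), R'.length = R.length ∧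
    (∀ i, (R'.getD i []).Sublist (R.getD i [])) ∧
    (∀ s ∈ R.flatten, (R'.flatten).count s = 1) ∧
    G = R'.map (List.map Prod.fst)

/-- `Comp_𝔅(G)` for the letter set `𝔅 = {x | P x}`: the list whose `i`-th entry is
the number of letters of `𝔅` in the `i`-th word of `G`. -/
def compOf (P : ℕ → Bool) (G : List (List ℕ)) : List ℕ :=
  G.map (fun wrd => (wrd.filter (fun x => P x)).length)

/-- The list `L` dominates the weak composition `a`: every initial partial sum of
`L` is at least the corresponding one of `a`. -/
def DomGe {n : ℕ} (L : List ℕ) (a : Fin n → ℕ) : Prop :=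
  ∀ k : ℕ, (∑ i ∈ Finset.univ.filter (fun i : Fin n => (i : ℕ) < k), a i) ≤ (L.take k).sum

/-- The word `A = (2n-1)^{a_1} (2n-3)^{a_2} ⋯ (1)^{a_n}` on the odd letters. -/
def wordA {n : ℕ} (a : Fin n → ℕ) : List ℕ :=
  (((List.finRange n).map (fun i => List.replicate (a i) (2 * (n - (i : ℕ)) - 1)))).flatten

/-- The word `B = (2n)^{b_1} (2n-2)^{b_2} ⋯ (2)^{b_n}` on the even letters. -/
def wordB {n : ℕ} (b : Fin n → ℕ) : List ℕ :=
  (((List.finRange n).map (fun i => List.replicate (b i) (2 * (n - (i : ℕ)))))).flatten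

/-- `C` lies in the genomic shuffle set `GSS(a, b)`: it lies in the genomic shuffle
product of the associated words and every genotype `G` of `Runs(C)` satisfies
`Comp_odd(G) ≥ a` and `Comp_even(G) ≥ b` in dominance order. -/
def InGSS {n : ℕ} (a b : Fin n → ℕ) (C : List (ℕ × ℕ)) : Prop :=
  InGenShuffle (wordA a) (wordB b) C ∧
  ∀ R G, IsRunDecomp C R → IsGenotypeSeq R G →
    DomGe (compOf (fun x => x % 2 == 1) G) a ∧ DomGe (compOf (fun x => x % 2 == 0) G) b

/-- `S` is a valid insertion of empty words into `Runs(C)`, of total length `n`,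
such that every genotype of `S` still satisfies the dominance conditions. -/
def BumpValid {n : ℕ} (a b : Fin n → ℕ) (C : List (ℕ × ℕ))
    (S : List (List (ℕ × ℕ))) : Prop :=
  S.length = n ∧ (∃ R, IsRunDecomp C R ∧ S.filter (fun r => r ≠ []) = R) ∧
  ∀ G, IsGenotypeSeq S G →
    DomGe (compOf (fun x => x % 2 == 1) G) a ∧ DomGe (compOf (fun x => x % 2 == 0) G) b

/-- `S = BumpRuns(C)`: `S` is the dominance-minimal valid insertion of empty words
into `Runs(C)`. -/
def IsBumpRuns {n : ℕ} (a b : Fin n → ℕ) (C : List (ℕ × ℕ))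
    (S : List (List (ℕ × ℕ))) : Prop :=
  BumpValid a b C S ∧ ∀ S', BumpValid a b C S' →
    ∀ k, ((S.take k).map List.length).sum ≤ ((S'.take k).map List.length).sum

/-- The multiplicity `g_{a,b}^c` of the weak composition `c` in the glide product
`a ⧢_gen b`: the number of words `C ∈ GSS(a, b)` with `Comp(BumpRuns(C)) = c`. -/
noncomputable def glideMult {n : ℕ} (a b c : Fin n → ℕ) : ℕ :=
  Set.ncard {C : List (ℕ × ℕ) | InGSS a b C ∧
    ∃ S, IsBumpRuns a b C S ∧ (fun i : Fin n => (S.getD (i : ℕ) []).length) = c}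

/-- The quasisymmetric glide polynomial `G_a^{(β)}(x_1, …, x_n)` of a strong
composition `a` with `ℓ(a) ≤ n`: the glide polynomial of the weak composition
`0^{n - ℓ(a)} a`. -/
noncomputable def qsGlide {R : Type*} [CommRing R] (β : R) (n : ℕ) (a : List ℕ) :
    MvPolynomial (Fin n) R :=
  glidePoly β (padLeft n a)

/-- A glide `(v, r)` of `a` is unsplit if its number of nonzero black entries
equals the number of nonzero entries of `a`, and no zero entry lies to the right of
a nonzero entry. -/
def IsUnsplitGlide {n : ℕ} (a : Fin n → ℕ) (v : Fin n → ℕ) (r : Fin n → Bool) : Prop :=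
  IsGlide a v r ∧
  (Finset.univ.filter (fun i => v i ≠ 0 ∧ r i = false)).card
      = (Finset.univ.filter (fun i => a i ≠ 0)).card ∧
  (∀ i j : Fin n, i < j → v i ≠ 0 → v j ≠ 0)

/-!
At `β = 0` only the glides without red entries survive. Such a glide of `0^{n-ℓ} a` is a
weak composition cut into `ℓ` consecutive nonempty blocks with sums `a_1, …, a_ℓ`, followed
by zeros; condition (ii) is automatic, because `ℓ` nonempty blocks inside `n` positions force
block `j` to end by position `n - ℓ + j`. Deleting the zeros of every block turns such a
cutting into a refinement of `a` by `flat b`, and every refinement lifts back, the zeros of `b`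
being absorbed into neighbouring blocks. Both sums therefore run over the same weak
compositions, all of whose entries are at most `|a|`.
-/

end GlidePaper

namespace List

theorem sum_take_eq_sum_range_getD (l : List ℕ) (k : ℕ) :
    (l.take k).sum = ∑ i ∈ Finset.range k, l.getD i 0 := by
  induction k with
  | zero => simp
  | succ k ih =>
    rw [take_add_one, sum_append, Finset.sum_range_succ, ih, getD_eq_getElem?_getD]
    cases l[k]? <;> simp

theorem sum_Ico_getD (l : List ℕ) (A B : ℕ) :
    ∑ t ∈ Finset.Ico A B, l.getD t 0 = ((l.take B).drop A).sum := by
  rw [drop_take, sum_take_eq_sum_range_getD, Finset.sum_Ico_eq_sum_range]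
  refine Finset.sum_congr rfl fun i _ => ?_
  rw [getD_eq_getElem?_getD, getD_eq_getElem?_getD, getElem?_drop]

theorem flatten_map_range_slices {α : Type*} (l : List α) (e : ℕ → ℕ) (ℓ : ℕ)
    (he0 : e 0 = 0) (hmono : ∀ j < ℓ, e j ≤ e (j + 1)) :
    ((range ℓ).map fun j => (l.take (e (j + 1))).drop (e j)).flatten = l.take (e ℓ) := by
  induction ℓ with
  | zero => simp [he0]
  | succ k ih =>
    rw [range_succ, map_append, flatten_append, ih fun j hj => hmono j (by omega)]
    simp only [map_cons, map_nil, flatten_cons, flatten_nil, append_nil]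
    conv_rhs => rw [← take_append_drop (e k) (l.take (e (k + 1)))]
    rw [take_take, Nat.min_eq_left (hmono k (by omega))]

theorem exists_flatten_append_of_flatten_eq_filter {α : Type*} {p : α → Bool}
    (P : List (List α)) (l : List α) (h : P.flatten = l.filter p) :
    ∃ (Q : List (List α)) (R : List α),
      Q.flatten ++ R = l ∧ Q.map (filter p) = P ∧ R.filter p = [] := by
  induction P generalizing l with
  | nil => exact ⟨[], l, rfl, rfl, h.symm⟩
  | cons x P ih =>
    obtain ⟨l₁, l₂, rfl, h₁, h₂⟩ := filter_eq_append_iff.mp h.symm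
    obtain ⟨Q, R, hQR, hQ, hR⟩ := ih l₂ h₂.symm
    exact ⟨l₁ :: Q, R, by simp [← hQR], by simp [h₁, hQ], hR⟩

theorem sum_take_add_length_sub_le_sum (L : List ℕ) (hL : ∀ x ∈ L, 1 ≤ x) (k : ℕ) :
    (L.take k).sum + (L.length - k) ≤ L.sum := by
  rw [← sum_take_add_sum_drop L k, ← length_drop]
  exact Nat.add_le_add_left
    (length_le_sum_of_one_le _ fun x hx => hL x (mem_of_mem_drop hx)) _

theorem sum_filter_ne_zero (l : List ℕ) : (l.filter (· ≠ 0)).sum = l.sum := by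
  induction l with
  | nil => rfl
  | cons x l ih => rw [filter_cons]; by_cases hx : x = 0 <;> simp_all

theorem map_sum_map_filter_ne_zero (Q : List (List ℕ)) :
    (Q.map (filter (· ≠ 0))).map sum = Q.map sum := by
  rw [map_map]
  exact map_congr_left fun q _ => sum_filter_ne_zero q

theorem one_le_of_mem_map_length_of_sum_pos {Q : List (List ℕ)}
    (hQ : ∀ s ∈ Q.map sum, 0 < s) :
    ∀ k ∈ Q.map length, 1 ≤ k := by
  simp only [mem_map, forall_exists_index, and_imp, forall_apply_eq_imp_iff₂] at hQ ⊢
  intro q hq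
  exact length_pos_iff.mpr fun hq0 => by simpa [hq0] using hQ q hq

end List

namespace GlidePaper

def HasBlockSums (l a : List ℕ) : Prop :=
  ∃ (Q : List (List ℕ)) (R : List ℕ),
    Q.flatten ++ R = l ∧ Q.map List.sum = a ∧ ∀ x ∈ R, x = 0

theorem listRefines_filter_ne_zero_iff (l a : List ℕ) (ha : ∀ x ∈ a, 0 < x) :
    ListRefines (l.filter (· ≠ 0)) a ↔ HasBlockSums l a := by
  constructor
  · rintro ⟨P, -, hP, rfl⟩
    obtain ⟨Q, R, hQR, rfl, hR⟩ := List.exists_flatten_append_of_flatten_eq_filter P l hP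
    refine ⟨Q, R, hQR, (List.map_sum_map_filter_ne_zero Q).symm, fun x hx => ?_⟩
    simpa using List.filter_eq_nil_iff.mp hR x hx
  · rintro ⟨Q, R, rfl, rfl, hR⟩
    refine ⟨Q.map (List.filter (· ≠ 0)), fun hmem => ?_, ?_,
      List.map_sum_map_filter_ne_zero Q⟩
    · obtain ⟨q, hq, hq0⟩ := List.mem_map.mp hmem
      have hpos := ha q.sum (List.mem_map_of_mem hq)
      rw [← List.sum_filter_ne_zero, hq0] at hpos
      exact absurd hpos (lt_irrefl 0)
    · have hR' : R.filter (· ≠ 0) = [] := List.filter_eq_nil_iff.mpr (by simpa using hR)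
      rw [List.filter_append, hR', List.append_nil, List.filter_flatten]

theorem hasBlockSums_of_cuts (l a : List ℕ) (e : ℕ → ℕ) (he0 : e 0 = 0)
    (hmono : ∀ j < a.length, e j ≤ e (j + 1))
    (htail : ∀ t, e a.length ≤ t → l.getD t 0 = 0)
    (hsum : ∀ j (hj : j < a.length), ∑ t ∈ Finset.Ico (e j) (e (j + 1)), l.getD t 0 = a[j]) :
    HasBlockSums l a := by
  refine ⟨(List.range a.length).map fun j => (l.take (e (j + 1))).drop (e j),
    l.drop (e a.length), ?_, ?_, fun x hx => ?_⟩
  · rw [List.flatten_map_range_slices l e _ he0 hmono, List.take_append_drop]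
  · refine List.ext_getElem (by simp) fun j _ hj => ?_
    simp only [List.getElem_map, List.getElem_range, ← List.sum_Ico_getD, hsum j hj]
  · obtain ⟨i, hi, rfl⟩ := List.getElem_of_mem hx
    rw [List.getElem_drop, ← List.getD_eq_getElem _ 0]
    exact htail _ (Nat.le_add_right _ _)

theorem sum_Ico_getD_flatten_append (Q : List (List ℕ)) (R : List ℕ) {j : ℕ}
    (hj : j < Q.length) :
    ∑ t ∈ Finset.Ico ((Q.map List.length).take j).sum ((Q.map List.length).take (j + 1)).sum,
      (Q.flatten ++ R).getD t 0 = Q[j].sum := by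
  have hle : ((Q.map List.length).take (j + 1)).sum ≤ Q.flatten.length := by
    rw [List.length_flatten]
    exact List.Sublist.sum_le_sum (List.take_sublist _ _) (fun _ _ => Nat.zero_le _)
  rw [List.sum_Ico_getD, List.take_append_of_le_length hle, List.drop_take_succ_flatten_eq_getElem]

section
variable {n : ℕ}

theorem extVal_eq_getD_ofFn (v : Fin n → ℕ) (t : ℕ) :
    extVal v t = (List.ofFn v).getD t 0 := by
  unfold extVal
  split_ifs with ht
  · simp [List.getD_eq_getElem?_getD, ht]
  · simp [List.getD_eq_getElem?_getD, ht]

theorem flattenW_eq_filter_ofFn (v : Fin n → ℕ) :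
    flattenW v = (List.ofFn v).filter (· ≠ 0) := by
  rw [flattenW, List.ofFn_eq_map]

theorem nzPos_eq_filter_range (v : Fin n → ℕ) :
    nzPos v = (List.range n).filter (fun t => extVal v t ≠ 0) := by
  rw [nzPos, ← List.map_coe_finRange_eq_range, List.filter_map]
  congr 2
  funext i
  simp [extVal]

theorem ofFn_padLeft (a : List ℕ) (hlen : a.length ≤ n) :
    List.ofFn (padLeft n a) = List.replicate (n - a.length) 0 ++ a := by
  apply List.ext_getElem (by simp; omega)
  intro j hj _
  rw [List.getElem_ofFn, padLeft, List.getElem_append]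
  simp only [List.length_replicate, List.getElem_replicate]
  split_ifs with h1 h2 h2
  · omega
  · exact List.getD_eq_getElem _ _ _
  · rfl
  · omega

theorem sum_padLeft (a : List ℕ) (hlen : a.length ≤ n) : ∑ i, padLeft n a i = a.sum := by
  rw [← List.sum_ofFn, ofFn_padLeft a hlen, List.sum_append, List.sum_replicate, smul_zero,
    zero_add]

theorem flattenW_padLeft (a : List ℕ) (ha : ∀ x ∈ a, 0 < x) (hlen : a.length ≤ n) :
    flattenW (padLeft n a) = a := by
  rw [flattenW_eq_filter_ofFn, ofFn_padLeft a hlen, List.filter_append,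
    List.filter_replicate_of_neg (by simp), List.nil_append, List.filter_eq_self]
  simpa [Nat.pos_iff_ne_zero] using ha

theorem extVal_padLeft (a : List ℕ) (hlen : a.length ≤ n) (t : ℕ) :
    extVal (padLeft n a) t = if t < n - a.length then 0 else a.getD (t - (n - a.length)) 0 := by
  rw [extVal_eq_getD_ofFn, ofFn_padLeft a hlen]
  split_ifs with ht
  · rw [List.getD_append _ _ _ _ (by simpa using ht), List.getD_replicate]; exact ht
  · rw [List.getD_append_right _ _ _ _ (by simpa using ht), List.length_replicate]

theorem nzPos_padLeft (a : List ℕ) (ha : ∀ x ∈ a, 0 < x) (hlen : a.length ≤ n) :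
    nzPos (padLeft n a) = List.range' (n - a.length) a.length := by
  have hsplit :
      List.range n = List.range' 0 (n - a.length) ++ List.range' (n - a.length) a.length := by
    simpa [Nat.sub_add_cancel hlen, List.range_eq_range'] using
      (List.range'_append (s := 0) (m := n - a.length) (n := a.length) (step := 1)).symm
  rw [nzPos_eq_filter_range, hsplit, List.filter_append, List.filter_eq_nil_iff.mpr,
    List.nil_append, List.filter_eq_self]
  · intro t ht
    rw [List.mem_range'_1] at ht
    rw [extVal_padLeft a hlen, if_neg (by omega), List.getD_eq_getElem _ _ (by omega)]
    simpa [Nat.pos_iff_ne_zero] using ha _ (List.getElem_mem _)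
  · intro t ht
    rw [List.mem_range'_1] at ht
    simp [extVal_padLeft a hlen, show t < n - a.length by omega]

theorem extRed_const_false (t : ℕ) : extRed (fun _ : Fin n => false) t = false := by
  simp [extRed]

theorem hasBlockSums_of_isGlide {a : List ℕ} (ha : ∀ x ∈ a, 0 < x) (hlen : a.length ≤ n)
    {v : Fin n → ℕ} (h : IsGlide (padLeft n a) v fun _ => false) :
    HasBlockSums (List.ofFn v) a := by
  obtain ⟨-, e, he0, -, htail, hlt, hblock⟩ := h
  rw [flattenW_padLeft a ha hlen] at htail hlt hblock
  refine hasBlockSums_of_cuts _ a e he0 (fun j hj => (hlt j hj).le)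
    (fun t ht => by rw [← extVal_eq_getD_ofFn]; exact htail t ht) fun j hj => ?_
  have hsum := (hblock j hj).1
  simp only [extVal_eq_getD_ofFn, extRed_const_false, List.getD_eq_getElem _ _ hj,
    Bool.false_eq_true, Finset.filter_false, Finset.card_empty, add_zero] at hsum
  exact hsum

theorem isGlide_of_hasBlockSums {a : List ℕ} (ha : ∀ x ∈ a, 0 < x) (hlen : a.length ≤ n)
    {v : Fin n → ℕ} (h : HasBlockSums (List.ofFn v) a) :
    IsGlide (padLeft n a) v fun _ => false := by
  obtain ⟨Q, R, hQR, rfl, hR⟩ := h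
  set L := Q.map List.length with hL
  set e : ℕ → ℕ := fun j => (L.take j).sum with he
  have hLlen : L.length = Q.length := List.length_map _
  have hLpos : ∀ x ∈ L, 1 ≤ x := List.one_le_of_mem_map_length_of_sum_pos ha
  have hend : e Q.length = Q.flatten.length := by
    simp only [he, ← hLlen, List.take_length, hL, List.length_flatten]
  have hnlen : Q.flatten.length ≤ n := by
    have hlength := congrArg List.length hQR
    rw [List.length_append, List.length_ofFn] at hlength
    omega
  have hgap : ∀ j, e j + (Q.length - j) ≤ e Q.length := fun j => by
    simpa [he, ← hLlen, List.take_length] using List.sum_take_add_length_sub_le_sum L hLpos j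
  have hstep : ∀ j < Q.length, e j < e (j + 1) := fun j hj => by
    have := hLpos L[j] (List.getElem_mem _)
    simp only [he, List.sum_take_succ _ _ (by omega : j < L.length)]
    omega
  refine ⟨by simp, e, by simp [he], ?_⟩
  rw [flattenW_padLeft _ ha hlen, List.length_map]
  refine ⟨by omega, fun t ht => ?_, hstep, fun j hj => ⟨?_, ?_, extRed_const_false _⟩⟩
  · rw [extVal_eq_getD_ofFn, ← hQR, List.getD_append_right _ _ _ _ (by omega),
      List.getD_eq_getElem?_getD]
    cases hx : R[t - Q.flatten.length]? with
    | none => rfl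
    | some x => exact hR x (List.mem_of_getElem? hx)
  · simp only [extVal_eq_getD_ofFn, ← hQR, extRed_const_false, Bool.false_eq_true,
      Finset.filter_false, Finset.card_empty, add_zero]
    rw [List.getD_eq_getElem _ _ (by simpa using hj), List.getElem_map, he]
    exact sum_Ico_getD_flatten_append Q R hj
  · rw [nzPos_padLeft _ ha hlen, List.getD_eq_getElem _ _ (by simpa using hj),
      List.getElem_range', List.length_map]
    have := hgap (j + 1)
    omega

theorem isGlide_padLeft_iff_listRefines {a : List ℕ} (ha : ∀ x ∈ a, 0 < x)
    (hlen : a.length ≤ n) (v : Fin n → ℕ) :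
    IsGlide (padLeft n a) v (fun _ => false) ↔ ListRefines (flattenW v) a := by
  rw [flattenW_eq_filter_ofFn, listRefines_filter_ne_zero_iff _ _ ha]
  exact ⟨hasBlockSums_of_isGlide ha hlen, isGlide_of_hasBlockSums ha hlen⟩

theorem le_sum_of_listRefines {a : List ℕ} {v : Fin n → ℕ} (h : ListRefines (flattenW v) a)
    (i : Fin n) : v i ≤ a.sum := by
  obtain ⟨P, -, hP, rfl⟩ := h
  by_cases hvi : v i = 0
  · simp [hvi]
  · have hmem : v i ∈ P.flatten := by
      rw [hP, flattenW_eq_filter_ofFn, List.mem_filter]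
      simp [hvi]
    calc v i ≤ P.flatten.sum := List.le_sum_of_mem hmem
      _ = (P.map List.sum).sum := List.sum_flatten

theorem redCount_eq_zero_iff (r : Fin n → Bool) : redCount r = 0 ↔ r = fun _ => false := by
  simp [redCount, Finset.filter_eq_empty_iff, funext_iff]

theorem glidePoly_zero_eq {R : Type*} [CommRing R] (b : Fin n → ℕ) :
    glidePoly (0 : R) b = ∑ p : Fin n → Fin ((∑ i, b i) + n + 1),
      if IsGlide b (fun i => (p i : ℕ)) (fun _ => false) then
        monomial (Finsupp.equivFunOnFinite.symm fun i => (p i : ℕ)) 1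
      else 0 := by
  rw [glidePoly, Fintype.sum_prod_type]
  refine Finset.sum_congr rfl fun p _ => ?_
  rw [Finset.sum_eq_single (fun _ => false) (fun r _ hr => ?_) (by simp)]
  · simp [(redCount_eq_zero_iff _).mpr rfl]
  · simp [zero_pow ((redCount_eq_zero_iff r).not.mpr hr)]

theorem sum_comp_val_eq_of_bounded {M : Type*} [AddCommMonoid M] {N₁ N₂ : ℕ}
    (hN : N₁ ≤ N₂) (f : (Fin n → ℕ) → M)
    (hf : ∀ w, (∃ i, N₁ ≤ w i) → f w = 0) :
    ∑ p : Fin n → Fin N₁, f (fun i => p i) =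
      ∑ p : Fin n → Fin N₂, f (fun i => p i) := by
  refine Fintype.sum_of_injective (fun p i => Fin.castLE hN (p i))
    ((Fin.castLE_injective hN).comp_left) _ _ (fun q hq => hf _ ?_) fun p => rfl
  by_contra! hlt
  exact hq ⟨fun i => ⟨q i, hlt i⟩, rfl⟩

end

/-- For every strong composition `a` with `ℓ(a) ≤ n`, the
fundamental quasisymmetric polynomial is the `β = 0` specialization of the
quasisymmetric glide polynomial: `F_a(x_1, …, x_n) = G_a^{(0)}(x_1, …, x_n)`. -/
theorem fundamental_eq_qsGlide_at_zero (n : ℕ) (a : List ℕ)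
    (ha : ∀ x ∈ a, 0 < x) (hlen : a.length ≤ n) :
    fundQS (R := ℤ) n a = qsGlide (0 : ℤ) n a := by
  let term : (Fin n → ℕ) → MvPolynomial (Fin n) ℤ := fun w =>
    if ListRefines (flattenW w) a then monomial (Finsupp.equivFunOnFinite.symm w) 1 else 0
  have hterm : ∀ w, (∃ i, a.sum + 1 ≤ w i) → term w = 0 := by
    rintro w ⟨i, hi⟩
    exact if_neg fun h => by have := le_sum_of_listRefines h i; omega
  rw [qsGlide, glidePoly_zero_eq, sum_padLeft a hlen]
  simp only [isGlide_padLeft_iff_listRefines ha hlen]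
  exact sum_comp_val_eq_of_bounded (by omega : a.sum + 1 ≤ a.sum + n + 1) term hterm

end GlidePaper
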